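/- arXiv:math/0509086 — 3 statements merged into one kernel-verified Lean document; each statement's English description precedes it below -/
import Mathlib

section
/- Let g : X → Y contract a (-1)-curve l with D·l = 0, where D is nef on X, and D = g^*D_Y, B_Y = g_*B, H_Y = D_Y - (K_Y + B_Y). Then H_Y² = H² + d² > 0 and H_Y·C > 0 for every irreducible curve C on Y, where d > 0 is as in the discrepancy formula K_X + B = g^*(K_Y+B_Y) + d l; hence H_Y is ample by Nakai-Moishezon. -/
/-- with `g : X → Y` contracting the `(-1)`-curve `l`, `D·l = 0`,
`D = g^*D_Y`, `B_Y = g_*B`, `H_Y = D_Y - (K_Y + B_Y)` and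
`K_X + B = g^*(K_Y+B_Y) + d·l` with `d > 0`:
`H_Y² = H² + d² > 0` and `H_Y·C > 0` for every irreducible curve `C` on `Y`,
hence `H_Y` is ample by the Nakai–Moishezon criterion. -/
theorem stmt_9
    (DivX DivY : Type*) [AddCommGroup DivX] [Module ℚ DivX]
    [AddCommGroup DivY] [Module ℚ DivY]
    (pull : DivY →ₗ[ℚ] DivX)
    (interX : DivX → DivX → ℚ) (interY : DivY → DivY → ℚ)
    (AmpleY CurveY : DivY → Prop)
    (hXsymm : ∀ Z W, interX Z W = interX W Z)
    (hXadd : ∀ Z W W', interX (Z + W) W' = interX Z W' + interX W W')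
    (hXsmul : ∀ (q : ℚ) (Z W : DivX), interX (q • Z) W = q * interX Z W)
    (K B D l : DivX) (KY BY DY : DivY) (d : ℚ)
    (hd : 0 < d)
    (hdisc : K + B = pull (KY + BY) + d • l)
    (hDl : interX D l = 0)
    (hDpull : D = pull DY)
    (hisom : ∀ Z W : DivY, interY Z W = interX (pull Z) (pull W))
    (hll : interX l l = -1)
    (hpulll : ∀ Z : DivY, interX (pull Z) l = 0)   -- projection formula
    (hHample : ∀ C : DivY, CurveY C → 0 < interX (D - (K + B)) (pull C))
    (hH2 : 0 < interX (D - (K + B)) (D - (K + B)))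
    (nakai : ∀ Z : DivY, 0 < interY Z Z →
        (∀ C, CurveY C → 0 < interY Z C) → AmpleY Z) :
    interY (DY - (KY + BY)) (DY - (KY + BY))
        = interX (D - (K + B)) (D - (K + B)) + d ^ 2
    ∧ 0 < interY (DY - (KY + BY)) (DY - (KY + BY))
    ∧ (∀ C, CurveY C → 0 < interY (DY - (KY + BY)) C)
    ∧ AmpleY (DY - (KY + BY)) := by
  have hXsub : ∀ Z W W' : DivX, interX (Z - W) W' = interX Z W' - interX W W' := by
    intro Z W W'
    have : Z - W = Z + (-1 : ℚ) • W := by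
      rw [neg_one_smul]; abel
    rw [this, hXadd, hXsmul]; ring
  have hXadd' : ∀ Z W W' : DivX, interX Z (W + W') = interX Z W + interX Z W' := by
    intro Z W W'
    rw [hXsymm, hXadd, hXsymm W Z, hXsymm W' Z]
  have hXsmul' : ∀ (q : ℚ) (Z W : DivX), interX Z (q • W) = q * interX Z W := by
    intro q Z W; rw [hXsymm, hXsmul, hXsymm]
  set H : DivX := D - (K + B) with hH
  have hpullH : pull (DY - (KY + BY)) = H + d • l := by
    rw [map_sub, ← hDpull, hH, hdisc]; abel
  have hHl : interX H l = d := by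
    rw [hH, hdisc, hXsub, hDl, hXadd, hXsmul, hpulll, hll]; ring
  have key : ∀ C : DivY, interY (DY - (KY + BY)) C = interX H (pull C) := by
    intro C
    rw [hisom, hpullH, hXadd, hXsmul, hXsymm l (pull C), hpulll]; ring
  have hsq : interY (DY - (KY + BY)) (DY - (KY + BY)) = interX H H + d ^ 2 := by
    rw [key, hpullH, hXadd', hXsmul', hHl]; ring
  have hpos : 0 < interY (DY - (KY + BY)) (DY - (KY + BY)) := by
    rw [hsq]; positivity
  have hcur : ∀ C, CurveY C → 0 < interY (DY - (KY + BY)) C := by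
    intro C hC; rw [key]; exact hHample C hC
  exact ⟨hsq, hpos, hcur, nakai _ hpos hcur⟩
end

section
/- Let f : X → C be a ruled surface over a curve of genus g ≥ 2. Suppose D is nef with a := D·F ≥ 2 (F the general fiber), B effective with (X,B) KLT, H = D - (K_X+B) ample, and assume χ(O_X) ≥ -D·(D + aK_X)/(2a²). Then χ(X, O_X(2D)) ≥ ((2a+1)/(2a))·D·((1 - 1/a)D + H + B) > 0, hence H^0(X, O_X(2D)) ≠ 0. -/
/-- Proposition 4.10, first part: ruled surface over a curve of
genus `g ≥ 2`, `D` nef with `a = D·F ≥ 2`, `(X,B)` KLT with `B` effective,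
`H = D - (K_X+B)` ample, and `χ(O_X) ≥ -D·(D + aK_X)/(2a²)` (Ambro's Lemma 4.2).
Then `χ(X, O_X(2D)) ≥ ((2a+1)/(2a))·D·((1 - 1/a)D + H + B) > 0`, hence
`H⁰(X, O_X(2D)) ≠ 0`. -/
theorem stmt_18
    (Div : Type*) [AddCommGroup Div] [Module ℚ Div]
    (inter : Div → Div → ℚ)
    (hsymm : ∀ Z W, inter Z W = inter W Z)
    (hadd : ∀ Z W W', inter (Z + W) W' = inter Z W' + inter W W')
    (hsmul : ∀ (q : ℚ) (Z W : Div), inter (q • Z) W = q * inter Z W)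
    (h0 : Div → ℕ)
    (KLT Nef Ample Effective : Div → Prop)
    (K B D F H : Div) (a : ℚ) (ha : 2 ≤ a)
    (hKLT : KLT B) (hBeff : Effective B) (hD : Nef D)
    (hHdef : H = D - (K + B)) (hHample : Ample H)
    (haF : inter D F = a)                              -- a = D·F
    (chiO chi2D : ℤ)
    (hchiO : -(inter D (D + a • K)) / (2 * a ^ 2) ≤ (chiO : ℚ))
    (hRR : (chi2D : ℚ) = inter ((2 : ℚ) • D) ((2 : ℚ) • D - K) / 2 + chiO)
    (hvan : chi2D ≤ (h0 ((2 : ℚ) • D) : ℤ))            -- h⁰(2D) ≥ χ(2D)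
    (hDD : 0 ≤ inter D D) (hDH : 0 < inter D H) (hDB : 0 ≤ inter D B) :
    ((2 * a + 1) / (2 * a)) * inter D ((1 - 1/a) • D + H + B) ≤ (chi2D : ℚ)
    ∧ 0 < chi2D
    ∧ h0 ((2 : ℚ) • D) ≠ 0 := by
  have hadd' : ∀ Z W W', inter Z (W + W') = inter Z W + inter Z W' := by
    intro Z W W'; rw [hsymm, hadd, hsymm, hsymm W']
  have hsmul' : ∀ (q : ℚ) (Z W : Div), inter Z (q • W) = q * inter Z W := by
    intro q Z W; rw [hsymm, hsmul, hsymm]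
  have hsub' : ∀ Z W W', inter Z (W - W') = inter Z W - inter Z W' := by
    intro Z W W'
    rw [sub_eq_add_neg, hadd', ← neg_one_smul ℚ W', hsmul']; ring
  set d := inter D D with hd
  set k := inter D K with hk
  set h := inter D H with hh
  set b := inter D B with hb
  have ha0 : 0 < a := by linarith
  have hkeq : h = d - (k + b) := by
    rw [hh, hHdef, hsub', hadd']
  have hDaK : inter D (D + a • K) = d + a * k := by
    rw [hadd', hsmul']
  have h2D : inter ((2 : ℚ) • D) ((2 : ℚ) • D - K) = 2 * (2 * d - k) := by
    rw [hsmul, hsub', hsmul']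
  have htgt : inter D ((1 - 1/a) • D + H + B) = (1 - 1/a) * d + h + b := by
    rw [hadd', hadd', hsmul']
  have hchi : (chi2D : ℚ) = 2 * d - k + chiO := by
    rw [hRR, h2D]; ring
  rw [hDaK] at hchiO
  have hchiO' : -(d + a * k) / (2 * a ^ 2) ≤ (chiO : ℚ) := hchiO
  -- main inequality
  have key : ((2 * a + 1) / (2 * a)) * ((1 - 1/a) * d + h + b) ≤ (chi2D : ℚ) := by
    rw [hchi]
    have heq : ((2 * a + 1) / (2 * a)) * ((1 - 1/a) * d + h + b)
        = 2 * d - k + (-(d + a * k) / (2 * a ^ 2)) := by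
      have hk' : k = d - h - b := by linarith [hkeq]
      rw [hk']
      field_simp
      ring
    rw [heq]
    linarith
  have hpos : 0 < ((2 * a + 1) / (2 * a)) * ((1 - 1/a) * d + h + b) := by
    apply mul_pos
    · positivity
    · have h1 : (0:ℚ) < 1 - 1/a := by
        rw [sub_pos]
        rw [div_lt_one ha0]; linarith
      nlinarith
  have hchi2Dpos : (0:ℚ) < (chi2D : ℚ) := lt_of_lt_of_le hpos key
  have hchi2DposZ : 0 < chi2D := by exact_mod_cast hchi2Dpos
  refine ⟨by rw [htgt]; exact key, hchi2DposZ, ?_⟩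
  intro hzero
  rw [hzero] at hvan
  omega
end

section
/- With the same setup (a = D·F ≥ 2, χ(O_X) ≥ -D(D + aK_X)/(2a²)), if moreover D·K_X ≤ 0 (e.g. if κ(X, -K_X) ≥ 0), then χ(X, O_X(D)) ≥ (a²-1)/(2a²)·D·(H+B) - (a+1)/(2a²)·D·K_X > 0, hence H^0(X, O_X(D)) ≠ 0. -/
/-- Proposition 4.10, second part: same setup (`a = D·F ≥ 2`,
`χ(O_X) ≥ -D·(D + aK_X)/(2a²)`), if moreover `D·K_X ≤ 0` (e.g. when
`κ(X, -K_X) ≥ 0`), then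
`χ(X, O_X(D)) ≥ (a²-1)/(2a²)·D·(H+B) - (a+1)/(2a²)·D·K_X > 0`,
hence `H⁰(X, O_X(D)) ≠ 0`. -/
theorem stmt_19
    (Div : Type*) [AddCommGroup Div] [Module ℚ Div]
    (inter : Div → Div → ℚ)
    (hsymm : ∀ Z W, inter Z W = inter W Z)
    (hadd : ∀ Z W W', inter (Z + W) W' = inter Z W' + inter W W')
    (hsmul : ∀ (q : ℚ) (Z W : Div), inter (q • Z) W = q * inter Z W)
    (h0 : Div → ℕ)
    (KLT Nef Ample Effective : Div → Prop)
    (K B D F H : Div) (a : ℚ) (ha : 2 ≤ a)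
    (hKLT : KLT B) (hBeff : Effective B) (hD : Nef D)
    (hHdef : H = D - (K + B)) (hHample : Ample H)
    (haF : inter D F = a)                              -- a = D·F
    (chiO chiD : ℤ)
    (hchiO : -(inter D (D + a • K)) / (2 * a ^ 2) ≤ (chiO : ℚ))
    (hRR : (chiD : ℚ) = inter D (D - K) / 2 + chiO)
    (hvan : chiD ≤ (h0 D : ℤ))                         -- h⁰(D) ≥ χ(D)
    (hDD : 0 ≤ inter D D) (hDH : 0 < inter D H) (hDB : 0 ≤ inter D B)
    (hDK : inter D K ≤ 0) :
    ((a ^ 2 - 1) / (2 * a ^ 2)) * inter D (H + B)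
        - ((a + 1) / (2 * a ^ 2)) * inter D K ≤ (chiD : ℚ)
    ∧ 0 < chiD
    ∧ h0 D ≠ 0 := by
  have ha0 : (0:ℚ) < a := by linarith
  have ha2 : (0:ℚ) < 2 * a ^ 2 := by positivity
  set x := inter D D with hx
  set h := inter D H with hh
  set b := inter D B with hb
  set k := inter D K with hk
  -- D = H + K + B
  have hDsum : D = H + (K + B) := by rw [hHdef]; abel
  have e1 : x = h + (k + b) := by
    have t : inter (H + (K + B)) D = h + (k + b) := by
      rw [hadd, hadd, hsymm H, hsymm K, hsymm B]
    rw [← hDsum] at t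
    rw [hx, hsymm]; exact t
  have e2 : inter D (D - K) = x - k := by
    have : D - K = D + (-1 : ℚ) • K := by rw [neg_one_smul]; abel
    rw [hsymm, this, hadd, hsmul, hsymm D, hsymm K]
    ring
  have e3 : inter D (D + a • K) = x + a * k := by
    rw [hsymm, hadd, hsmul, hsymm D, hsymm K]
  have e4 : inter D (H + B) = h + b := by
    rw [hsymm, hadd, hsymm H, hsymm B]
  rw [e2] at hRR
  rw [e3] at hchiO
  rw [e4]
  have key : ((a ^ 2 - 1) / (2 * a ^ 2)) * (h + b)
      - ((a + 1) / (2 * a ^ 2)) * k = (x - k) / 2 - (x + a * k) / (2 * a ^ 2) := by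
    rw [e1]; field_simp; ring
  have h1 : ((a ^ 2 - 1) / (2 * a ^ 2)) * (h + b)
      - ((a + 1) / (2 * a ^ 2)) * k ≤ (chiD : ℚ) := by
    rw [key, hRR]
    have : -(x + a * k) / (2 * a ^ 2) = -((x + a * k) / (2 * a ^ 2)) := by ring
    rw [this] at hchiO
    linarith
  have hpos : (0:ℚ) < ((a ^ 2 - 1) / (2 * a ^ 2)) * (h + b)
      - ((a + 1) / (2 * a ^ 2)) * k := by
    have h5 : (0:ℚ) < (a ^ 2 - 1) / (2 * a ^ 2) := by
      apply div_pos; nlinarith; exact ha2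
    have h6 : (0:ℚ) < (a + 1) / (2 * a ^ 2) := by positivity
    nlinarith
  have hchiDpos : 0 < chiD := by
    have : (0:ℚ) < (chiD : ℚ) := lt_of_lt_of_le hpos h1
    exact_mod_cast this
  exact ⟨h1, hchiDpos, by omega⟩
end
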